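/- Let K ≥ 2 and fix t ≥ 0. Then lim_{b → 1⁻} C(b, t) · (1 − b) = 0. Consequently, the magnitude of the Dirichlet conditional vector field u_t(x | x_1 = e_i) = C(x_i, t)(e_i − x) vanishes as x approaches the target vertex e_i. -/

import Mathlib

open Filter

/-- The incomplete beta function `B(x; a, c) = ∫_0^x s^{a-1}(1-s)^{c-1} ds`. -/
noncomputable def incBeta (x a c : ℝ) : ℝ := ∫ s in (0:ℝ)..x, s ^ (a - 1) * (1 - s) ^ (c - 1)

/-- The regularized incomplete beta function `I_x(a, c) = B(x; a, c) / B(a, c)`. -/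
noncomputable def regIncBeta (x a c : ℝ) : ℝ := incBeta x a c / incBeta 1 a c

/-- `Ĩ_x(a, c) = ∂ I_x(a, c) / ∂a`. -/
noncomputable def Itilde (x a c : ℝ) : ℝ := deriv (fun a' : ℝ => regIncBeta x a' c) a

/-- The Dirichlet flow-matching coefficient
`C(b, t) = -Ĩ_b(t+1, K-1) · B(t+1, K-1) / ((1-b)^{K-1} · b^t)`. -/
noncomputable def Ccoef (K : ℕ) (b t : ℝ) : ℝ :=
  -Itilde b (t + 1) ((K : ℝ) - 1) * incBeta 1 (t + 1) ((K : ℝ) - 1) /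
    ((1 - b) ^ (K - 1) * b ^ t)

/-!
Since `1 - I_b(a, c) = ∫_b^1 s^{a-1}(1-s)^{c-1} ds / B(a, c)`, the map `a ↦ I_b(a, c)` is
Lipschitz near `a = t + 1` with constant `O((1 - b)^c)` as `b → 1⁻`; a local Lipschitz bound
controls `deriv` whether or not the map is differentiable, so `Ĩ_b(t + 1, c) = O((1 - b)^c)`.
For `c = K - 1` this cancels the factor `(1 - b)^{K-1}` of `C(b, t)`, leaving
`C(b, t) (1 - b) = O(1 - b)`.
-/

open Real Set MeasureTheory intervalIntegral Asymptotics Topology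

lemma rpow_neg_three_quarters_le_two {s : ℝ} (hs : 1 / 2 ≤ s) : s ^ (-3 / 4 : ℝ) ≤ 2 := by
  have hs0 : 0 < s := by linarith
  have h : (1 / 2 : ℝ) ≤ s ^ (3 / 4 : ℝ) :=
    calc (1 / 2 : ℝ) = (1 / 2 : ℝ) ^ (1 : ℝ) := (rpow_one _).symm
    _ ≤ (1 / 2 : ℝ) ^ (3 / 4 : ℝ) := rpow_le_rpow_of_exponent_ge (by norm_num) (by norm_num)
        (by norm_num)
    _ ≤ s ^ (3 / 4 : ℝ) := rpow_le_rpow (by norm_num) hs (by norm_num)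
  rw [show (-3 / 4 : ℝ) = -(3 / 4) by norm_num, rpow_neg hs0.le]
  calc (s ^ (3 / 4 : ℝ))⁻¹ ≤ (1 / 2 : ℝ)⁻¹ := inv_anti₀ (by norm_num) h
  _ = 2 := by norm_num

/-- The `θ`-derivative of `s ^ θ` is `s ^ θ * log s`, and `|log s| ≤ 4 s ^ (-1/4)`. -/
lemma abs_rpow_sub_rpow_le {s u v : ℝ} (hs0 : 0 < s) (hs1 : s ≤ 1) (hu : -1 / 2 ≤ u)
    (hv : -1 / 2 ≤ v) : |s ^ u - s ^ v| ≤ 4 * s ^ (-3 / 4 : ℝ) * |u - v| := by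
  have hlog_nonpos : log s ≤ 0 := log_nonpos hs0.le hs1
  have hlog : -log s ≤ 4 * s ^ (-(1 / 4) : ℝ) := by
    have h := log_le_sub_one_of_pos (rpow_pos_of_pos hs0 (-(1 / 4) : ℝ))
    rw [log_rpow hs0] at h
    linarith
  have hbound : ∀ θ ∈ uIcc v u, ‖s ^ θ * log s‖ ≤ 4 * s ^ (-3 / 4 : ℝ) := by
    intro θ hθ
    have hpow : s ^ θ ≤ s ^ (-1 / 2 : ℝ) :=
      rpow_le_rpow_of_exponent_ge hs0 hs1 (le_trans (le_min hv hu) hθ.1)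
    rw [norm_mul, norm_of_nonneg (rpow_nonneg hs0.le _), norm_of_nonpos hlog_nonpos]
    calc s ^ θ * -log s ≤ s ^ (-1 / 2 : ℝ) * (4 * s ^ (-(1 / 4) : ℝ)) :=
          mul_le_mul hpow hlog (by linarith) (rpow_nonneg hs0.le _)
    _ = 4 * s ^ (-3 / 4 : ℝ) := by
          rw [show (-3 / 4 : ℝ) = -1 / 2 + -(1 / 4) by norm_num, rpow_add hs0]
          ring
  have hderiv : ∀ θ ∈ uIcc v u,
      HasDerivWithinAt (fun θ : ℝ => s ^ θ) (s ^ θ * log s) (uIcc v u) θ :=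
    fun θ _ => (hasStrictDerivAt_const_rpow hs0 θ).hasDerivAt.hasDerivWithinAt
  have h := (convex_uIcc v u).norm_image_sub_le_of_norm_hasDerivWithin_le hderiv hbound
    left_mem_uIcc right_mem_uIcc
  rwa [norm_eq_abs, norm_eq_abs] at h

section BetaIntegral

variable {a a' b c : ℝ}

lemma intervalIntegrable_rpow_mul_one_sub_rpow (ha : 0 < a) (hc : 1 ≤ c) :
    IntervalIntegrable (fun s => s ^ (a - 1) * (1 - s) ^ (c - 1)) volume 0 1 :=
  (intervalIntegrable_rpow' (by linarith)).mul_continuousOn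
    ((continuous_rpow_const (by linarith)).comp (continuous_const.sub continuous_id)).continuousOn

lemma intervalIntegrable_rpow_mul_one_sub_rpow_of_mem (ha : 0 < a) (hc : 1 ≤ c) {x y : ℝ}
    (hx : x ∈ Icc (0 : ℝ) 1) (hy : y ∈ Icc (0 : ℝ) 1) :
    IntervalIntegrable (fun s => s ^ (a - 1) * (1 - s) ^ (c - 1)) volume x y := by
  refine (intervalIntegrable_rpow_mul_one_sub_rpow ha hc).mono_set ?_
  rw [uIcc_of_le zero_le_one]
  exact uIcc_subset_Icc hx hy

lemma incBeta_one_sub_incBeta (ha : 0 < a) (hc : 1 ≤ c) (hb : b ∈ Icc (0 : ℝ) 1) :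
    incBeta 1 a c - incBeta b a c = ∫ s in b..1, s ^ (a - 1) * (1 - s) ^ (c - 1) :=
  integral_interval_sub_left
    (intervalIntegrable_rpow_mul_one_sub_rpow ha hc)
    (intervalIntegrable_rpow_mul_one_sub_rpow_of_mem ha hc (left_mem_Icc.2 zero_le_one) hb)

lemma incBeta_one_pos (ha : 0 < a) (hc : 1 ≤ c) : 0 < incBeta 1 a c :=
  intervalIntegral_pos_of_pos_on
    (intervalIntegrable_rpow_mul_one_sub_rpow ha hc)
    (fun s hs => mul_pos (rpow_pos_of_pos hs.1 _) (rpow_pos_of_pos (by linarith [hs.2]) _))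
    zero_lt_one

lemma antitoneOn_incBeta_one (hc : 1 ≤ c) : AntitoneOn (fun a => incBeta 1 a c) (Ioi 0) := by
  intro a ha a' ha' haa'
  refine integral_mono_on_of_le_Ioo zero_le_one
    (intervalIntegrable_rpow_mul_one_sub_rpow ha' hc)
    (intervalIntegrable_rpow_mul_one_sub_rpow ha hc)
    fun s hs => ?_
  exact mul_le_mul_of_nonneg_right (rpow_le_rpow_of_exponent_ge hs.1 hs.2.le (by linarith))
    (rpow_nonneg (by linarith [hs.2]) _)

lemma abs_integral_mul_one_sub_rpow_le {g : ℝ → ℝ} {M : ℝ} (hc : 1 ≤ c)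
    (hg : ∀ s ∈ Ioc (0 : ℝ) 1, |g s| ≤ M * s ^ (-3 / 4 : ℝ)) :
    |∫ s in (0 : ℝ)..1, g s * (1 - s) ^ (c - 1)| ≤ 4 * M := by
  have h := norm_integral_le_of_norm_le zero_le_one (μ := volume)
    (f := fun s => g s * (1 - s) ^ (c - 1)) (g := fun s => M * s ^ (-3 / 4 : ℝ))
    (Eventually.of_forall fun s hs => ?_) ((intervalIntegrable_rpow' (by norm_num)).const_mul M)
  · rw [intervalIntegral.integral_const_mul, integral_rpow (Or.inl (by norm_num)), one_rpow,
      zero_rpow (by norm_num)] at h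
    norm_num at h
    linarith
  · rw [norm_mul, norm_eq_abs, norm_of_nonneg (rpow_nonneg (by linarith [hs.2]) _)]
    calc |g s| * (1 - s) ^ (c - 1) ≤ M * s ^ (-3 / 4 : ℝ) * 1 :=
          mul_le_mul (hg s hs) (rpow_le_one (by linarith [hs.2]) (by linarith [hs.1])
            (by linarith)) (rpow_nonneg (by linarith [hs.2]) _) ((abs_nonneg _).trans (hg s hs))
    _ = M * s ^ (-3 / 4 : ℝ) := mul_one _

lemma abs_integral_tail_mul_one_sub_rpow_le {g : ℝ → ℝ} {M : ℝ} (hb : b < 1) (hc : 1 ≤ c)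
    (hg : ∀ s ∈ Ioc b 1, |g s| ≤ M) :
    |∫ s in b..1, g s * (1 - s) ^ (c - 1)| ≤ M * (1 - b) ^ c := by
  have hM : 0 ≤ M := (abs_nonneg _).trans (hg 1 ⟨hb, le_rfl⟩)
  have h := norm_integral_le_of_norm_le_const (a := b) (b := 1)
    (f := fun s => g s * (1 - s) ^ (c - 1)) (C := M * (1 - b) ^ (c - 1)) ?_
  · rwa [abs_of_pos (sub_pos.2 hb), rpow_sub_one (sub_pos.2 hb).ne', mul_assoc,
      div_mul_cancel₀ _ (sub_pos.2 hb).ne'] at h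
  · intro s hs
    rw [uIoc_of_le hb.le] at hs
    rw [norm_mul, norm_eq_abs, norm_of_nonneg (rpow_nonneg (by linarith [hs.2]) _)]
    exact mul_le_mul (hg s hs) (rpow_le_rpow (by linarith [hs.2]) (by linarith [hs.1])
      (by linarith)) (rpow_nonneg (by linarith [hs.2]) _) hM

lemma incBeta_one_le_four (ha : 1 / 2 ≤ a) (hc : 1 ≤ c) : incBeta 1 a c ≤ 4 := by
  have h := abs_integral_mul_one_sub_rpow_le (g := fun s => s ^ (a - 1)) (M := 1) hc
    fun s hs => ?_
  · linarith [le_abs_self (incBeta 1 a c), show |incBeta 1 a c| ≤ 4 * 1 from h]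
  · rw [abs_of_nonneg (rpow_nonneg hs.1.le _), one_mul]
    exact rpow_le_rpow_of_exponent_ge hs.1 hs.2 (by linarith)

lemma abs_incBeta_one_sub_incBeta_one_le (ha : 1 / 2 ≤ a) (ha' : 1 / 2 ≤ a') (hc : 1 ≤ c) :
    |incBeta 1 a' c - incBeta 1 a c| ≤ 16 * |a' - a| := by
  rw [incBeta, incBeta, ← integral_sub (intervalIntegrable_rpow_mul_one_sub_rpow (by linarith) hc)
    (intervalIntegrable_rpow_mul_one_sub_rpow (by linarith) hc)]
  simp only [← sub_mul]
  refine (abs_integral_mul_one_sub_rpow_le (M := 4 * |a' - a|) hc fun s hs => ?_).trans_eq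
    (by ring)
  have h := abs_rpow_sub_rpow_le hs.1 hs.2 (u := a' - 1) (v := a - 1) (by linarith)
    (by linarith)
  rw [sub_sub_sub_cancel_right] at h
  linarith

lemma abs_incBeta_one_sub_incBeta_le (ha : 1 / 2 ≤ a) (hc : 1 ≤ c) (hb : 1 / 2 ≤ b)
    (hb1 : b < 1) : |incBeta 1 a c - incBeta b a c| ≤ 2 * (1 - b) ^ c := by
  rw [incBeta_one_sub_incBeta (by linarith) hc ⟨by linarith, hb1.le⟩]
  refine abs_integral_tail_mul_one_sub_rpow_le (g := fun s => s ^ (a - 1)) hb1 hc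
    fun s hs => ?_
  have hs0 : 0 < s := by linarith [hs.1]
  rw [abs_of_nonneg (rpow_nonneg hs0.le _)]
  exact (rpow_le_rpow_of_exponent_ge hs0 hs.2 (by linarith)).trans
    (rpow_neg_three_quarters_le_two (by linarith [hs.1]))

lemma abs_incBeta_tail_sub_le (ha : 1 / 2 ≤ a) (ha' : 1 / 2 ≤ a') (hc : 1 ≤ c)
    (hb : 1 / 2 ≤ b) (hb1 : b < 1) :
    |(incBeta 1 a' c - incBeta b a' c) - (incBeta 1 a c - incBeta b a c)|
      ≤ 8 * |a' - a| * (1 - b) ^ c := by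
  have hb' : b ∈ Icc (0 : ℝ) 1 := ⟨by linarith, hb1.le⟩
  have h11 : (1 : ℝ) ∈ Icc (0 : ℝ) 1 := right_mem_Icc.2 zero_le_one
  rw [incBeta_one_sub_incBeta (by linarith) hc hb', incBeta_one_sub_incBeta (by linarith) hc hb',
    ← integral_sub (intervalIntegrable_rpow_mul_one_sub_rpow_of_mem (by linarith) hc hb' h11)
      (intervalIntegrable_rpow_mul_one_sub_rpow_of_mem (by linarith) hc hb' h11)]
  simp only [← sub_mul]
  refine abs_integral_tail_mul_one_sub_rpow_le hb1 hc fun s hs => ?_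
  have hs0 : 0 < s := by linarith [hs.1]
  have h := abs_rpow_sub_rpow_le hs0 hs.2 (u := a' - 1) (v := a - 1) (by linarith)
    (by linarith)
  rw [sub_sub_sub_cancel_right] at h
  calc |s ^ (a' - 1) - s ^ (a - 1)| ≤ 4 * s ^ (-3 / 4 : ℝ) * |a' - a| := h
  _ ≤ 4 * 2 * |a' - a| := by gcongr; exact rpow_neg_three_quarters_le_two (by linarith [hs.1])
  _ = 8 * |a' - a| := by ring

end BetaIntegral

lemma abs_div_sub_div_le {u v x y γ : ℝ} (hγ : 0 < γ) (hx : γ ≤ x) (hy : γ ≤ y) :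
    |u / x - v / y| ≤ (|u - v| * |y| + |v| * |y - x|) / γ ^ 2 := by
  have hx0 : 0 < x := hγ.trans_le hx
  have hy0 : 0 < y := hγ.trans_le hy
  have hxy : u / x - v / y = ((u - v) * y + v * (y - x)) / (x * y) := by
    field_simp
    ring
  rw [hxy, abs_div, abs_of_pos (mul_pos hx0 hy0)]
  calc |(u - v) * y + v * (y - x)| / (x * y)
      ≤ (|u - v| * |y| + |v| * |y - x|) / (x * y) := by
        gcongr
        exact (abs_add_le _ _).trans_eq (by rw [abs_mul, abs_mul])
  _ ≤ (|u - v| * |y| + |v| * |y - x|) / γ ^ 2 :=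
        div_le_div_of_nonneg_left (by positivity) (by positivity) (by nlinarith)

/-- Writing `I_b(a, c) = 1 - T(a) / B(a)` with the tail `T(a) = ∫_b^1`, both `T` and its
increments carry a factor `(1 - b) ^ c`, while `B` stays between `B(a + 1/2, c)` and `4`. -/
lemma abs_regIncBeta_sub_le {a a' b c : ℝ} (ha : 1 ≤ a) (ha' : |a' - a| ≤ 1 / 2)
    (hc : 1 ≤ c) (hb : 1 / 2 ≤ b) (hb1 : b < 1) :
    |regIncBeta b a' c - regIncBeta b a c|
      ≤ 64 / incBeta 1 (a + 1 / 2) c ^ 2 * (1 - b) ^ c * |a' - a| := by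
  obtain ⟨ha'₁, ha'₂⟩ := abs_le.1 ha'
  have hγ : 0 < incBeta 1 (a + 1 / 2) c := incBeta_one_pos (by linarith) hc
  have hγa : incBeta 1 (a + 1 / 2) c ≤ incBeta 1 a c :=
    antitoneOn_incBeta_one hc (mem_Ioi.2 (by linarith)) (mem_Ioi.2 (by linarith)) (by linarith)
  have hγa' : incBeta 1 (a + 1 / 2) c ≤ incBeta 1 a' c :=
    antitoneOn_incBeta_one hc (mem_Ioi.2 (by linarith)) (mem_Ioi.2 (by linarith)) (by linarith)
  have hreg : ∀ x, 0 < incBeta 1 x c →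
      regIncBeta b x c = 1 - (incBeta 1 x c - incBeta b x c) / incBeta 1 x c := by
    intro x hx
    rw [regIncBeta]
    field_simp
    ring
  rw [hreg a' (hγ.trans_le hγa'), hreg a (hγ.trans_le hγa), sub_sub_sub_cancel_left]
  refine (abs_div_sub_div_le hγ hγa hγa').trans ?_
  have hT := abs_incBeta_one_sub_incBeta_le (by linarith) hc hb hb1 (a := a')
  have hdT := abs_incBeta_tail_sub_le (by linarith) (by linarith) hc hb hb1 (a := a) (a' := a')
  have hB := incBeta_one_le_four (by linarith) hc (a := a')
  have hdB := abs_incBeta_one_sub_incBeta_one_le (by linarith) (by linarith) hc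
    (a := a) (a' := a')
  rw [abs_sub_comm] at hdT
  rw [abs_of_pos (hγ.trans_le hγa')]
  calc _ ≤ (8 * |a' - a| * (1 - b) ^ c * 4 + 2 * (1 - b) ^ c * (16 * |a' - a|))
        / incBeta 1 (a + 1 / 2) c ^ 2 := by gcongr; linarith
  _ = _ := by ring

theorem Itilde_isBigO {a c : ℝ} (ha : 1 ≤ a) (hc : 1 ≤ c) :
    (fun b => Itilde b a c) =O[𝓝[<] 1] fun b => (1 - b) ^ c := by
  refine IsBigO.of_bound (64 / incBeta 1 (a + 1 / 2) c ^ 2) ?_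
  filter_upwards [Ioo_mem_nhdsLT (show (1 / 2 : ℝ) < 1 by norm_num)] with b hb
  have hε : 0 ≤ (1 - b) ^ c := rpow_nonneg (by linarith [hb.2]) _
  rw [norm_of_nonneg hε]
  refine norm_deriv_le_of_lip' (by positivity) ?_
  filter_upwards [Metric.closedBall_mem_nhds a (by norm_num : (0 : ℝ) < 1 / 2)] with a' ha'
  rw [norm_eq_abs, norm_eq_abs]
  exact abs_regIncBeta_sub_le ha (by rwa [Metric.mem_closedBall, dist_eq] at ha') hc hb.1.le hb.2

/-- The magnitude of the Dirichlet conditional vector field vanishes at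
the target vertex: `lim_{b → 1⁻} C(b, t) · (1 - b) = 0`. -/
theorem Ccoef_tendsto_zero_at_target_vertex (K : ℕ) (hK : 2 ≤ K) (t : ℝ) (ht : 0 ≤ t) :
    Tendsto (fun b : ℝ => Ccoef K b t * (1 - b)) (nhdsWithin 1 (Set.Iio 1)) (nhds 0) := by
  have hc : 1 ≤ (K : ℝ) - 1 := by
    have : (2 : ℝ) ≤ K := by exact_mod_cast hK
    linarith
  have hpow : ∀ b : ℝ, (1 - b) ^ (K - 1) = (1 - b) ^ ((K : ℝ) - 1) := fun b => by
    rw [← rpow_natCast, Nat.cast_sub (by omega : 1 ≤ K), Nat.cast_one]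
  set B := incBeta 1 (t + 1) ((K : ℝ) - 1)
  have hC : (fun b : ℝ => Ccoef K b t * (1 - b)) = fun b =>
      Itilde b (t + 1) ((K : ℝ) - 1) * (-B * (1 - b) / ((1 - b) ^ ((K : ℝ) - 1) * b ^ t)) := by
    funext b
    rw [Ccoef, hpow]
    ring
  have hlim : Tendsto (fun b : ℝ => -B * (1 - b) / b ^ t) (𝓝[<] 1) (𝓝 0) := by
    have hcont : ContinuousAt (fun b : ℝ => -B * (1 - b) / b ^ t) 1 :=
      (continuous_const.mul (continuous_const.sub continuous_id)).continuousAt.div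
        (continuousAt_rpow_const _ _ (Or.inl one_ne_zero)) (by simp)
    simpa using hcont.tendsto.mono_left nhdsWithin_le_nhds
  rw [hC]
  refine ((Itilde_isBigO (by linarith) hc).mul (isBigO_refl _ _)).trans_tendsto (hlim.congr' ?_)
  filter_upwards [self_mem_nhdsWithin] with b hb
  have : (1 - b) ^ ((K : ℝ) - 1) ≠ 0 := (rpow_pos_of_pos (sub_pos.2 hb) _).ne'
  field_simp
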